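/- arXiv:1712.05390 — 5 statements merged into one kernel-verified Lean document; each statement's English description precedes it below -/
import Mathlib

section
/- For every integer n ≥ 1, Pr(P ≥ n+2) = 1/2 - (1/2^(2n+1))·C(2n,n) - (1/2^(2n))·C(2n,n+1), where P is a binomial random variable with parameters 2n and 1/2. -/
/-!
By the symmetry `C(2n, k) = C(2n, 2n - k)`, the binomial coefficients above and below the middle
have the same sum, so each side carries `(2^(2n) - C(2n, n)) / 2`; removing the term `k = n + 1`
from the upper side leaves the tail `k ≥ n + 2`.
-/

open Finset

namespace Nat

theorem sum_Ioc_choose_eq_sum_range (a m : ℕ) :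
    ∑ k ∈ Ioc a m, m.choose k = ∑ k ∈ range (m - a), m.choose k := by
  refine sum_nbij' (m - ·) (m - ·) ?_ ?_ ?_ ?_ ?_ <;> intro k hk <;>
    simp only [mem_Ioc, mem_range] at hk ⊢
  all_goals first | omega | exact (choose_symm hk.2).symm

theorem sum_Ioc_choose_eq_choose_succ_add_sum_Icc (a m : ℕ) :
    ∑ k ∈ Ioc a m, m.choose k = m.choose (a + 1) + ∑ k ∈ Icc (a + 2) m, m.choose k := by
  rw [show Icc (a + 2) m = Ioc (a + 1) m from Icc_add_one_left_eq_Ioc _ _]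
  rcases lt_or_ge a m with h | h
  · rw [← insert_Ioc_add_one_left_eq_Ioc h, sum_insert (by simp)]
  · simp [choose_eq_zero_of_lt (Nat.lt_succ_of_le h), Ioc_eq_empty_of_le h,
      Ioc_eq_empty_of_le (h.trans (le_succ a))]

theorem two_mul_sum_Ioc_choose_add_centralBinom (n : ℕ) :
    2 * ∑ k ∈ Ioc n (2 * n), (2 * n).choose k + n.centralBinom = 2 ^ (2 * n) := by
  have h := sum_range_add_sum_Ico (fun k => (2 * n).choose k) (by omega : n + 1 ≤ 2 * n + 1)
  rw [sum_range_succ, Ico_add_one_add_one_eq_Ioc, sum_range_choose] at h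
  rw [← h, two_mul, centralBinom_eq_two_mul_choose, sum_Ioc_choose_eq_sum_range,
    show 2 * n - n = n by omega]
  ring

end Nat

theorem binomial_half_ge_succ_succ_general (n : ℕ) :
    ∑ k ∈ Finset.Icc (n + 2) (2 * n), ((2 * n).choose k : ℝ) / 2 ^ (2 * n)
      = 1 / 2 - (1 / 2 ^ (2 * n + 1)) * ((2 * n).choose n : ℝ)
        - (1 / 2 ^ (2 * n)) * ((2 * n).choose (n + 1) : ℝ) := by
  have hsum : 2 * ((2 * n).choose (n + 1) + ∑ k ∈ Icc (n + 2) (2 * n), ((2 * n).choose k : ℝ))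
      + (2 * n).choose n = 2 ^ (2 * n) := by
    have h := Nat.two_mul_sum_Ioc_choose_add_centralBinom n
    rw [Nat.sum_Ioc_choose_eq_choose_succ_add_sum_Icc, Nat.centralBinom_eq_two_mul_choose] at h
    exact_mod_cast h
  have hS : ∑ k ∈ Icc (n + 2) (2 * n), ((2 * n).choose k : ℝ)
      = 2 ^ (2 * n) / 2 - (2 * n).choose n / 2 - (2 * n).choose (n + 1) := by
    linarith
  rw [← sum_div, hS, pow_succ]
  field_simp

/-- For every integer `n ≥ 1`, if `P ~ Binomial(2n, 1/2)`, then
`Pr(P ≥ n+2) = 1/2 - (1/2^(2n+1)) * C(2n, n) - (1/2^(2n)) * C(2n, n+1)`. -/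
theorem binomial_half_ge_succ_succ (n : ℕ) (hn : 1 ≤ n) :
    ∑ k ∈ Finset.Icc (n + 2) (2 * n), ((2 * n).choose k : ℝ) / 2 ^ (2 * n)
      = 1 / 2 - (1 / 2 ^ (2 * n + 1)) * ((2 * n).choose n : ℝ)
        - (1 / 2 ^ (2 * n)) * ((2 * n).choose (n + 1) : ℝ) :=
  binomial_half_ge_succ_succ_general n
end

section
/- Let x : ℤ/2nℤ → ℤ be an assignment of votes with each x(i) ∈ {-1, +1}, and suppose the number of +1 votes P satisfies P ≥ 2⌊n/2+1⌋. Then there exists i ∈ ℤ/2nℤ such that both arcs [i, i+n) and [i+n, i) (each containing exactly n voters) have strictly more +1 votes than ⌊n/2⌋, i.e., both districts are majority-positive. -/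
/-- Discrete intermediate value theorem for `ℕ`-valued sequences whose steps
increase by at most one. -/
lemma circle_ivt_nat (f : ℕ → ℕ) (hf : ∀ k, f (k + 1) ≤ f k + 1) (m t : ℕ)
    (h0 : f 0 ≤ t) (hm : t ≤ f m) : ∃ k, f k = t := by
  induction m with
  | zero => exact ⟨0, le_antisymm h0 hm⟩
  | succ m ih =>
    by_cases h : t ≤ f m
    · exact ih h
    · push_neg at h
      exact ⟨m + 1, by have := hf m; omega⟩

/-- Voters indexed by `ZMod (2n)` each cast a vote in `{-1, +1}`. If the total number
of `+1` votes is at least `2 * ⌊n/2 + 1⌋ = 2 * (n/2 + 1)`, then there is a split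
point `i` such that both arcs `[i, i+n)` and `[i+n, i)` contain strictly more than
`⌊n/2⌋` positive votes (both districts are majority-positive). -/
theorem circle_two_districts_majority (n : ℕ) (hn : 1 ≤ n)
    (x : ZMod (2 * n) → ℤ) (hx : ∀ i, x i = -1 ∨ x i = 1)
    (hP : 2 * (n / 2 + 1) ≤
      (Finset.univ.filter (fun i : Fin (2 * n) => x (i : ZMod (2 * n)) = 1)).card) :
    ∃ i : ZMod (2 * n),
      n / 2 < ((Finset.range n).filter
        (fun j : ℕ => x (i + (j : ZMod (2 * n))) = 1)).card ∧
      n / 2 < ((Finset.range n).filter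
        (fun j : ℕ => x (i + (n : ZMod (2 * n)) + (j : ZMod (2 * n))) = 1)).card := by
  haveI : NeZero (2 * n) := ⟨by omega⟩
  obtain ⟨P, hPdef⟩ : ∃ P, P =
      (Finset.univ.filter (fun i : Fin (2 * n) => x (i : ZMod (2 * n)) = 1)).card := ⟨_, rfl⟩
  rw [← hPdef] at hP
  set S : ZMod (2 * n) → ℕ := fun z => if x z = 1 then 1 else 0 with hS
  have hS1 : ∀ z, S z ≤ 1 := by intro z; simp only [hS]; split <;> omega
  set F : ℕ → ℕ := fun k => ∑ j ∈ Finset.range n, S ((k : ZMod (2 * n)) + (j : ℕ)) with hFdef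
  -- shifting a full-period sum
  have hshift : ∀ k : ℕ, ∑ j ∈ Finset.range (2 * n), S ((k : ZMod (2 * n)) + (j : ℕ))
      = ∑ z : ZMod (2 * n), S z := by
    intro k
    rw [Finset.sum_nbij' (i := fun j => (k : ZMod (2 * n)) + (j : ℕ))
        (j := fun z => (z - (k : ZMod (2 * n))).val)]
    · intro a _; exact Finset.mem_univ _
    · intro z _; exact Finset.mem_range.2 (ZMod.val_lt _)
    · intro a ha
      have h1 : (k : ZMod (2 * n)) + (a : ℕ) - k = (a : ZMod (2 * n)) := by ring
      rw [h1, ZMod.val_natCast_of_lt (Finset.mem_range.1 ha)]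
    · intro z _
      rw [ZMod.natCast_val, ZMod.cast_id]; ring
    · intro a _; rfl
  have hunivP : ∑ z : ZMod (2 * n), S z = P := by
    rw [hPdef, Finset.card_filter]
    rw [Finset.sum_nbij' (i := fun z : ZMod (2 * n) => (⟨z.val, ZMod.val_lt z⟩ : Fin (2 * n)))
        (j := fun i : Fin (2 * n) => ((i : ℕ) : ZMod (2 * n)))]
    · intro a _; exact Finset.mem_univ _
    · intro a _; exact Finset.mem_univ _
    · intro z _; simp [ZMod.natCast_val, ZMod.cast_id]
    · intro i _
      ext
      simp [ZMod.val_natCast_of_lt i.isLt]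
    · intro z _
      simp only [hS]
      congr 1
      simp [ZMod.natCast_val, ZMod.cast_id]
  have hsplit : ∀ g : ℕ → ℕ, ∑ j ∈ Finset.range (2 * n), g j
      = ∑ j ∈ Finset.range n, g j + ∑ j ∈ Finset.range n, g (n + j) := by
    intro g
    rw [two_mul, Finset.sum_range_add]
  -- F k + F (k + n) = P
  have hA : ∀ k : ℕ, F k + F (k + n) = P := by
    intro k
    have h1 := hsplit (fun j => S ((k : ZMod (2 * n)) + (j : ℕ)))
    rw [hshift k, hunivP] at h1
    rw [h1]
    congr 1
    simp only [hFdef]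
    apply Finset.sum_congr rfl
    intro j _
    congr 1
    push_cast
    ring
  have hFP : ∀ k, F k ≤ P := fun k => le_of_le_of_eq (Nat.le_add_right _ _) (hA k)
  -- step relation
  have hB : ∀ k : ℕ, F (k + 1) + S (k : ZMod (2 * n))
      = F k + S ((k : ZMod (2 * n)) + (n : ℕ)) := by
    intro k
    obtain ⟨m, hm⟩ : ∃ m, n = m + 1 := ⟨n - 1, by omega⟩
    have e1 : F k = S (k : ZMod (2 * n)) +
        ∑ j ∈ Finset.range m, S ((k : ZMod (2 * n)) + ((j : ℕ) + 1 : ℕ)) := by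
      simp only [hFdef, hm, Finset.sum_range_succ']
      rw [add_comm]
      congr 1
      push_cast
      ring
    have e2 : F (k + 1) = (∑ j ∈ Finset.range m, S ((k : ZMod (2 * n)) + ((j : ℕ) + 1 : ℕ)))
        + S ((k : ZMod (2 * n)) + ((m : ℕ) + 1 : ℕ)) := by
      simp only [hFdef, hm, Finset.sum_range_succ]
      congr 1
      · apply Finset.sum_congr rfl; intro j _; congr 1; push_cast; ring
      · congr 1; push_cast; ring
    rw [e1, e2]
    have e3 : ((m + 1 : ℕ) : ZMod (2 * n)) = ((n : ℕ) : ZMod (2 * n)) := by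
      rw [hm]
    rw [e3]
    ring
  have hstep : ∀ k, F (k + 1) ≤ F k + 1 ∧ F k ≤ F (k + 1) + 1 := by
    intro k
    have := hB k
    have h1 := hS1 (k : ZMod (2 * n))
    have h2 := hS1 ((k : ZMod (2 * n)) + (n : ℕ))
    omega
  have htP : n / 2 + 1 ≤ P := by omega
  -- find k with F k and F (k + n) both at least n/2 + 1
  have key : ∃ k : ℕ, n / 2 + 1 ≤ F k ∧ n / 2 + 1 ≤ F (k + n) := by
    have h0n := hA 0
    rw [Nat.zero_add] at h0n
    by_cases h0 : n / 2 + 1 ≤ F 0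
    · by_cases hn' : n / 2 + 1 ≤ F (0 + n)
      · exact ⟨0, h0, hn'⟩
      · push_neg at hn'
        rw [Nat.zero_add] at hn'
        obtain ⟨k, hk⟩ := circle_ivt_nat (fun k => P - F k)
          (fun k => by
            show P - F (k + 1) ≤ P - F k + 1
            have := (hstep k).2
            have := hFP k
            have := hFP (k + 1)
            omega)
          n (P - (n / 2 + 1))
          (by show P - F 0 ≤ P - (n / 2 + 1); omega)
          (by
            show P - (n / 2 + 1) ≤ P - F n
            have := hFP n
            omega)
        have hk' : P - F k = P - (n / 2 + 1) := hk
        have hFk : F k = n / 2 + 1 := by have := hFP k; omega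
        refine ⟨k, le_of_eq hFk.symm, ?_⟩
        have := hA k
        omega
    · push_neg at h0
      obtain ⟨k, hk⟩ := circle_ivt_nat F (fun k => (hstep k).1) n (n / 2 + 1)
        (le_of_lt h0) (by omega)
      refine ⟨k, le_of_eq hk.symm, ?_⟩
      have := hA k
      omega
  obtain ⟨k, hk1, hk2⟩ := key
  refine ⟨(k : ZMod (2 * n)), ?_, ?_⟩
  · have hcard : ((Finset.range n).filter
        (fun j : ℕ => x ((k : ZMod (2 * n)) + (j : ZMod (2 * n))) = 1)).card = F k := by
      rw [Finset.card_filter]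
    omega
  · have hcard : ((Finset.range n).filter
        (fun j : ℕ => x ((k : ZMod (2 * n)) + (n : ZMod (2 * n)) + (j : ZMod (2 * n))) = 1)).card
        = F (k + n) := by
      rw [Finset.card_filter]
      simp only [hFdef, hS]
      apply Finset.sum_congr rfl
      intro j _
      congr 2
      push_cast
      ring
    omega
end

section
/- For z ∈ (-1,1), the centroid x̄(z) = (1/M(z)) ∫_{-1}^{z} 2x√(1-x²) dx of the left circular segment satisfies x̄(z) ≥ (z-1)/2. -/
open Real intervalIntegral

/-- Area of the portion of the unit disk with first coordinate at most `z`. -/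
noncomputable def diskMass (z : ℝ) : ℝ := ∫ x in (-1 : ℝ)..z, 2 * Real.sqrt (1 - x ^ 2)

/-- `x`-coordinate of the centroid of the portion of the unit disk with `x ≤ z`. -/
noncomputable def diskCentroid (z : ℝ) : ℝ :=
  (∫ x in (-1 : ℝ)..z, 2 * x * Real.sqrt (1 - x ^ 2)) / diskMass z

/-- Moment of inertia about its centroid of the portion of the unit disk with `x ≤ z`. -/
noncomputable def diskInertia (z : ℝ) : ℝ :=
  ∫ x in (-1 : ℝ)..z, ∫ y in (-Real.sqrt (1 - x ^ 2))..Real.sqrt (1 - x ^ 2),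
    (y ^ 2 + (x - diskCentroid z) ^ 2)

/-!
The moment `∫_{-1}^z 2x√(1-x²) dx = -(2/3)(1-z²)^{3/2}` factors as `(z-1)/2 · L(z)` with
`L(z) = (4/3)√(1-z)(1+z)^{3/2} = ∫_{-1}^z 2√(1-z)√(1+x) dx`. Since `√(1-x) ≥ √(1-z)` for `x ≤ z`,
`L(z) ≤ M(z)`, and because `z - 1 < 0` this gives `x̄(z) = (z-1)/2 · L(z)/M(z) ≥ (z-1)/2`.
-/

theorem integral_sqrt {t : ℝ} (ht : 0 ≤ t) : ∫ x in (0 : ℝ)..t, √x = 2 / 3 * √t ^ 3 := by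
  have h3 : t ^ (3 / 2 : ℝ) = √t ^ 3 := by
    rw [sqrt_eq_rpow, ← rpow_natCast, ← rpow_mul ht]
    norm_num
  have hrpow : ∫ x in (0 : ℝ)..t, √x = ∫ x in (0 : ℝ)..t, x ^ (1 / 2 : ℝ) := by
    simp_rw [sqrt_eq_rpow]
  rw [hrpow, integral_rpow (Or.inl (by norm_num)), ← h3]
  norm_num
  ring

theorem integral_two_mul_mul_sqrt_one_sub_sq {z : ℝ} (hz : z ∈ Set.Icc (-1 : ℝ) 1) :
    ∫ x in (-1 : ℝ)..z, 2 * x * √(1 - x ^ 2) = -(2 / 3) * √(1 - z ^ 2) ^ 3 := by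
  have hsubst : ∫ x in (-1 : ℝ)..z, ((fun u => √u) ∘ fun x => 1 - x ^ 2) x * -(2 * x)
      = ∫ u in (0 : ℝ)..1 - z ^ 2, √u := by
    rw [integral_comp_mul_deriv (fun x _ => by simpa using (hasDerivAt_pow 2 x).const_sub 1)
      (by fun_prop) continuous_sqrt]
    norm_num
  rw [integral_sqrt (by nlinarith [hz.1, hz.2])] at hsubst
  calc ∫ x in (-1 : ℝ)..z, 2 * x * √(1 - x ^ 2)
      = -∫ x in (-1 : ℝ)..z, ((fun u => √u) ∘ fun x => 1 - x ^ 2) x * -(2 * x) := by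
        rw [← integral_neg]; congr 1; ext x; simp only [Function.comp_apply]; ring
    _ = -(2 / 3) * √(1 - z ^ 2) ^ 3 := by rw [hsubst]; ring

theorem integral_sqrt_one_add {z : ℝ} (hz : -1 ≤ z) :
    ∫ x in (-1 : ℝ)..z, √(1 + x) = 2 / 3 * √(1 + z) ^ 3 := by
  rw [integral_comp_add_left (fun x => √x), add_neg_cancel, integral_sqrt (by linarith)]

theorem sqrt_one_sub_mul_sqrt_one_add_le_sqrt_one_sub_sq {x z : ℝ} (hxz : x ≤ z) (hx : x ≤ 1) :
    √(1 - z) * √(1 + x) ≤ √(1 - x ^ 2) := by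
  calc √(1 - z) * √(1 + x) ≤ √(1 - x) * √(1 + x) := by gcongr
    _ = √(1 - x ^ 2) := by rw [← sqrt_mul (by linarith)]; ring_nf

theorem le_diskMass {z : ℝ} (hz : z ∈ Set.Icc (-1 : ℝ) 1) :
    4 / 3 * √(1 - z) * √(1 + z) ^ 3 ≤ diskMass z := by
  calc 4 / 3 * √(1 - z) * √(1 + z) ^ 3
      = ∫ x in (-1 : ℝ)..z, 2 * √(1 - z) * √(1 + x) := by
        rw [integral_const_mul, integral_sqrt_one_add hz.1]; ring
    _ ≤ diskMass z := by
      refine integral_mono_on hz.1 (Continuous.intervalIntegrable (by fun_prop) _ _)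
        (Continuous.intervalIntegrable (by fun_prop) _ _) fun x hx => ?_
      rw [mul_assoc]
      gcongr
      exact sqrt_one_sub_mul_sqrt_one_add_le_sqrt_one_sub_sq hx.2 (hx.2.trans hz.2)

/-- The centroid of the left circular segment is at least `(z-1)/2`. -/
theorem diskCentroid_ge (z : ℝ) (hz : z ∈ Set.Ioo (-1 : ℝ) 1) :
    (z - 1) / 2 ≤ diskCentroid z := by
  have hz' := Set.Ioo_subset_Icc_self hz
  set L := 4 / 3 * √(1 - z) * √(1 + z) ^ 3
  have hL : 0 < L := by
    have := sqrt_pos.mpr (by linarith [hz.2] : (0 : ℝ) < 1 - z)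
    have := sqrt_pos.mpr (by linarith [hz.1] : (0 : ℝ) < 1 + z)
    positivity
  have hmoment : -(2 / 3) * √(1 - z ^ 2) ^ 3 = (z - 1) / 2 * L := by
    have hsq : √(1 - z) ^ 2 = 1 - z := sq_sqrt (by linarith [hz.2])
    rw [show 1 - z ^ 2 = (1 - z) * (1 + z) by ring, sqrt_mul (by linarith [hz.2])]
    linear_combination (-(2 / 3) * √(1 - z) * √(1 + z) ^ 3) * hsq
  have hM := le_diskMass hz'
  rw [diskCentroid, integral_two_mul_mul_sqrt_one_sub_sq hz', le_div_iff₀ (hL.trans_le hM),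
    hmoment]
  exact mul_le_mul_of_nonpos_left hM (by linarith [hz.2])
end

section
/- For z ∈ (-1,1], define M(z), x̄(z) as the mass and centroid x-coordinate of the region of the unit disk with x ≤ z, and I(z) = ∫_{-1}^{z} ∫_{-√(1-x²)}^{√(1-x²)} (y² + (x - x̄(z))²) dy dx the moment of inertia about the centroid. Then I(z) + I(-z) ≥ 2·I(0) for all z ∈ (-1,1). -/
open Real intervalIntegral

/-!
By the parallel axis theorem `I(z) = P(z) - S(z)² / M(z)`, where `P` is the moment of inertia
about the origin and `S` the first moment. `P` integrates an even function, so
`P(z) + P(-z) = 2 P(0)`; moreover `S(±z)² = (4/9)(1 - z²)³` and `M(z) + M(-z) = π`. Writing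
`M(±z) = π/2 ± a`, the theorem reduces to `(π/2)² (1 - z²)³ ≤ (π/2 + a)(π/2 - a)`. For `z ≥ 0`
this follows from `a ≤ 2z - z³/3` (from `√(1 - x²) ≤ 1 - x²/2`) away from the rim, and from
`π/2 - a ≥ (2/3)(1 - z)²(2 + z)` (from `√(1 - x²) ≥ 1 - x²`) near it.
-/

open Set

theorem integral_add_integral_neg_of_even {f : ℝ → ℝ} (hf : Continuous f)
    (heven : ∀ x, f (-x) = f x) (a z : ℝ) :
    (∫ x in a..z, f x) + (∫ x in a..-z, f x) = 2 * ∫ x in a..0, f x := by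
  have hint : ∀ b c : ℝ, IntervalIntegrable f MeasureTheory.volume b c :=
    fun b c => hf.intervalIntegrable b c
  have hreflect : (∫ x in (0 : ℝ)..z, f x) = ∫ x in -z..0, f x := by
    simpa [heven] using integral_comp_neg (a := 0) (b := z) f
  rw [← integral_add_adjacent_intervals (hint a 0) (hint 0 z),
    ← integral_add_adjacent_intervals (hint a 0) (hint 0 (-z)), hreflect,
    integral_symm (-z) 0]
  ring

theorem integral_neg_self_sq_add_sq (s c : ℝ) :
    ∫ y in -s..s, (y ^ 2 + c ^ 2) = 2 / 3 * s ^ 3 + 2 * s * c ^ 2 := by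
  rw [integral_add ((continuous_pow 2).intervalIntegrable _ _) intervalIntegrable_const,
    integral_pow, integral_const]
  simp only [smul_eq_mul]
  ring

theorem sqrt_le_one_add_div_two {t : ℝ} (ht : -1 ≤ t) : √t ≤ (1 + t) / 2 :=
  Real.sqrt_le_iff.2 ⟨by linarith, by nlinarith [sq_nonneg (t - 1)]⟩

theorem hasDerivAt_sqrt_one_sub_sq_pow_three {x : ℝ} (hx : x ∈ Ioo (-1 : ℝ) 1) :
    HasDerivAt (fun x => √(1 - x ^ 2) ^ 3) (-3 * x * √(1 - x ^ 2)) x := by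
  have hpos : 0 < 1 - x ^ 2 := by nlinarith [hx.1, hx.2]
  have hsub : HasDerivAt (fun x : ℝ => 1 - x ^ 2) (-(2 * x)) x := by
    simpa using (hasDerivAt_pow 2 x).const_sub 1
  refine ((hsub.sqrt hpos.ne').pow 3).congr_deriv ?_
  field_simp
  push_cast
  ring

theorem pi_div_two_sq_mul_one_sub_sq_pow_three_le {z a : ℝ} (hz0 : 0 ≤ z) (hz1 : z ≤ 1)
    (ha0 : 0 ≤ a) (ha : a ≤ 2 * z - z ^ 3 / 3)
    (ha' : a ≤ π / 2 - 2 / 3 * (1 - z) ^ 2 * (2 + z)) :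
    (π / 2) ^ 2 * (1 - z ^ 2) ^ 3 ≤ (π / 2 + a) * (π / 2 - a) := by
  have hπ₁ := pi_gt_d2
  have hπ₂ := pi_lt_d2
  rcases le_total z (17 / 20) with hz | hz
  · have hsq : a ^ 2 ≤ z ^ 2 * (2 - z ^ 2 / 3) ^ 2 := by
      nlinarith [pow_le_pow_left₀ ha0 ha 2]
    have hq : 0 ≤ 3 - 3 * z ^ 2 + z ^ 4 := by nlinarith
    have hpoly : (2 - z ^ 2 / 3) ^ 2 ≤ 2.4649 * (3 - 3 * z ^ 2 + z ^ 4) := by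
      nlinarith
    have hpi : 2.4649 * (3 - 3 * z ^ 2 + z ^ 4) ≤ (π / 2) ^ 2 * (3 - 3 * z ^ 2 + z ^ 4) :=
      mul_le_mul_of_nonneg_right (by nlinarith) hq
    nlinarith [mul_le_mul_of_nonneg_left (hpoly.trans hpi) (sq_nonneg z)]
  · have hrim : (1 - z) * (1 + z) ^ 3 ≤ 6 / 5 := by
      have h8 : (1 + z) ^ 3 ≤ 8 :=
        (pow_le_pow_left₀ (by linarith) (by linarith : 1 + z ≤ 2) 3).trans_eq (by norm_num)
      nlinarith [pow_nonneg (by linarith : (0 : ℝ) ≤ 1 + z) 3]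
    have hπ : π / 2 * ((1 - z) * (1 + z) ^ 3) ≤ 2 / 3 * (2 + z) := by
      nlinarith [mul_le_mul_of_nonneg_left hrim (by positivity : (0 : ℝ) ≤ π / 2)]
    have hb : 2 / 3 * (1 - z) ^ 2 * (2 + z) ≤ π / 2 - a := by linarith
    have hb0 : 0 ≤ 2 / 3 * (1 - z) ^ 2 * (2 + z) := by
      have : 0 ≤ 2 + z := by linarith
      positivity
    calc (π / 2) ^ 2 * (1 - z ^ 2) ^ 3
        = π / 2 * (1 - z) ^ 2 * (π / 2 * ((1 - z) * (1 + z) ^ 3)) := by ring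
      _ ≤ π / 2 * (1 - z) ^ 2 * (2 / 3 * (2 + z)) := by gcongr
      _ = π / 2 * (2 / 3 * (1 - z) ^ 2 * (2 + z)) := by ring
      _ ≤ π / 2 * (π / 2 - a) := by gcongr
      _ ≤ (π / 2 + a) * (π / 2 - a) := by
        gcongr
        · linarith
        · linarith

noncomputable def diskFirstMoment (z : ℝ) : ℝ := ∫ x in (-1 : ℝ)..z, 2 * x * √(1 - x ^ 2)

/-- `∬ (x² + y²)` over the part of the unit disk with `x ≤ z`, after integrating out `y`. -/
noncomputable def diskSecondMoment (z : ℝ) : ℝ :=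
  ∫ x in (-1 : ℝ)..z, (2 / 3 * √(1 - x ^ 2) ^ 3 + 2 * x ^ 2 * √(1 - x ^ 2))

/-- The parallel axis theorem; it also holds when `diskMass z = 0`, both sides then being
`diskSecondMoment z` because division by zero gives `0`. -/
theorem diskInertia_eq (z : ℝ) :
    diskInertia z = diskSecondMoment z - diskFirstMoment z ^ 2 / diskMass z := by
  set c := diskCentroid z
  have hpointwise : ∀ x : ℝ, (∫ y in -√(1 - x ^ 2)..√(1 - x ^ 2), (y ^ 2 + (x - c) ^ 2)) =
      (2 / 3 * √(1 - x ^ 2) ^ 3 + 2 * x ^ 2 * √(1 - x ^ 2))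
        - 2 * c * (2 * x * √(1 - x ^ 2)) + c ^ 2 * (2 * √(1 - x ^ 2)) := fun x => by
    rw [integral_neg_self_sq_add_sq]
    ring
  have hint : ∀ g : ℝ → ℝ, Continuous g → IntervalIntegrable g MeasureTheory.volume (-1) z :=
    fun g hg => hg.intervalIntegrable _ _
  rw [diskInertia, integral_congr fun x _ => hpointwise x,
    integral_add ((hint _ (by fun_prop)).sub (hint _ (by fun_prop))) (hint _ (by fun_prop)),
    integral_sub (hint _ (by fun_prop)) (hint _ (by fun_prop)),
    integral_const_mul, integral_const_mul]
  change diskSecondMoment z - 2 * c * diskFirstMoment z + c ^ 2 * diskMass z = _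
  have hc : c = diskFirstMoment z / diskMass z := rfl
  rcases eq_or_ne (diskMass z) 0 with h | h
  · simp [hc, h]
  · rw [hc]
    field_simp
    ring

theorem diskSecondMoment_add_neg (z : ℝ) :
    diskSecondMoment z + diskSecondMoment (-z) = 2 * diskSecondMoment 0 :=
  integral_add_integral_neg_of_even (by fun_prop) (fun x => by simp only [neg_sq]) _ _

theorem continuous_two_mul_sqrt_one_sub_sq : Continuous fun x : ℝ => 2 * √(1 - x ^ 2) := by
  fun_prop

theorem diskMass_add_neg (z : ℝ) : diskMass z + diskMass (-z) = 2 * diskMass 0 :=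
  integral_add_integral_neg_of_even continuous_two_mul_sqrt_one_sub_sq
    (fun x => by simp only [neg_sq]) _ _

theorem diskMass_one : diskMass 1 = π := by
  rw [diskMass, integral_const_mul, integral_sqrt_one_sub_sq]
  ring

theorem diskMass_zero : diskMass 0 = π / 2 := by
  have h := diskMass_add_neg 1
  rw [diskMass_one, diskMass, integral_same] at h
  linarith

theorem diskMass_eq_add_integral (z : ℝ) :
    diskMass z = π / 2 + ∫ x in (0 : ℝ)..z, 2 * √(1 - x ^ 2) := by
  rw [← diskMass_zero, diskMass, diskMass, integral_add_adjacent_intervals]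
  all_goals exact continuous_two_mul_sqrt_one_sub_sq.intervalIntegrable _ _

theorem diskMass_eq_sub_integral (z : ℝ) :
    diskMass z = π - ∫ x in z..1, 2 * √(1 - x ^ 2) := by
  rw [← diskMass_one, diskMass, diskMass,
    ← integral_add_adjacent_intervals (b := z) (c := 1), add_sub_cancel_right]
  all_goals exact continuous_two_mul_sqrt_one_sub_sq.intervalIntegrable _ _

theorem pi_div_two_le_diskMass {z : ℝ} (hz : 0 ≤ z) : π / 2 ≤ diskMass z := by
  have : 0 ≤ ∫ x in (0 : ℝ)..z, 2 * √(1 - x ^ 2) := integral_nonneg hz fun x _ => by positivity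
  rw [diskMass_eq_add_integral]
  linarith

theorem diskMass_le_of_nonneg {z : ℝ} (hz0 : 0 ≤ z) (hz1 : z ≤ 1) :
    diskMass z ≤ π / 2 + (2 * z - z ^ 3 / 3) := by
  have hle : (∫ x in (0 : ℝ)..z, 2 * √(1 - x ^ 2)) ≤ ∫ x in (0 : ℝ)..z, (2 - x ^ 2) := by
    refine integral_mono_on hz0 (continuous_two_mul_sqrt_one_sub_sq.intervalIntegrable _ _)
      (Continuous.intervalIntegrable (by fun_prop) _ _) fun x hx => ?_
    have := sqrt_le_one_add_div_two (t := 1 - x ^ 2) (by nlinarith [hx.1, hx.2])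
    linarith
  have hval : ∫ x in (0 : ℝ)..z, (2 - x ^ 2) = 2 * z - z ^ 3 / 3 := by
    rw [integral_sub intervalIntegrable_const ((continuous_pow 2).intervalIntegrable _ _),
      integral_const, integral_pow]
    simp only [smul_eq_mul]
    ring
  rw [diskMass_eq_add_integral]
  linarith

theorem diskMass_le_pi_sub {z : ℝ} (hz : z ≤ 1) :
    diskMass z ≤ π - 2 / 3 * (1 - z) ^ 2 * (2 + z) := by
  have hle : (∫ x in z..1, 2 * (1 - x ^ 2)) ≤ ∫ x in z..1, 2 * √(1 - x ^ 2) := by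
    refine integral_mono_on hz (Continuous.intervalIntegrable (by fun_prop) _ _)
      (continuous_two_mul_sqrt_one_sub_sq.intervalIntegrable _ _) fun x _ => ?_
    have := Real.le_sqrt_self_iff.2 (by nlinarith : 1 - x ^ 2 ≤ 1)
    linarith
  have hval : ∫ x in z..1, 2 * (1 - x ^ 2) = 2 / 3 * (1 - z) ^ 2 * (2 + z) := by
    rw [integral_const_mul, integral_sub intervalIntegrable_const
      ((continuous_pow 2).intervalIntegrable _ _), integral_const, integral_pow]
    simp only [smul_eq_mul]
    ring
  rw [diskMass_eq_sub_integral]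
  linarith

theorem diskFirstMoment_eq {z : ℝ} (hz : z ∈ Icc (-1 : ℝ) 1) :
    diskFirstMoment z = -(2 / 3) * √(1 - z ^ 2) ^ 3 := by
  rw [diskFirstMoment, integral_eq_sub_of_hasDerivAt_of_le
    (f := fun x => -(2 / 3) * √(1 - x ^ 2) ^ 3) hz.1 (by fun_prop)
    (fun x hx => ?_) (Continuous.intervalIntegrable (by fun_prop) _ _)]
  · norm_num
  · exact ((hasDerivAt_sqrt_one_sub_sq_pow_three ⟨hx.1, hx.2.trans_le hz.2⟩).const_mul
      (-(2 / 3))).congr_deriv (by ring)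

theorem diskFirstMoment_sq {z : ℝ} (hz : z ∈ Icc (-1 : ℝ) 1) :
    diskFirstMoment z ^ 2 = 4 / 9 * (1 - z ^ 2) ^ 3 := by
  have h : 0 ≤ 1 - z ^ 2 := by nlinarith [hz.1, hz.2]
  rw [diskFirstMoment_eq hz, mul_pow, ← pow_mul, show 3 * 2 = 2 * 3 from rfl, pow_mul,
    Real.sq_sqrt h]
  norm_num

theorem diskFirstMoment_sq_div_add_le {z : ℝ} (hz0 : 0 ≤ z) (hz1 : z < 1) :
    diskFirstMoment z ^ 2 / diskMass z + diskFirstMoment (-z) ^ 2 / diskMass (-z) ≤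
      2 * (diskFirstMoment 0 ^ 2 / diskMass 0) := by
  set a := diskMass z - π / 2
  have hMz : diskMass z = π / 2 + a := by ring
  have hMnz : diskMass (-z) = π / 2 - a := by
    linarith [diskMass_add_neg z, diskMass_zero]
  have hrim : 0 < 2 / 3 * (1 - z) ^ 2 * (2 + z) := by
    have : 0 < 1 - z := by linarith
    have : 0 < 2 + z := by linarith
    positivity
  have ha0 : 0 ≤ a := by linarith [pi_div_two_le_diskMass hz0]
  have ha1 : a < π / 2 := by linarith [diskMass_le_pi_sub hz1.le]
  have hbound := pi_div_two_sq_mul_one_sub_sq_pow_three_le hz0 hz1.le ha0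
    (by linarith [diskMass_le_of_nonneg hz0 hz1.le]) (by linarith [diskMass_le_pi_sub hz1.le])
  have hplus : 0 < π / 2 + a := by linarith [pi_pos]
  have hminus : 0 < π / 2 - a := by linarith
  rw [hMz, hMnz, diskMass_zero, diskFirstMoment_sq ⟨by linarith, hz1.le⟩,
    diskFirstMoment_sq ⟨by linarith, by linarith⟩, diskFirstMoment_sq ⟨by norm_num, by norm_num⟩,
    neg_sq]
  calc 4 / 9 * (1 - z ^ 2) ^ 3 / (π / 2 + a) + 4 / 9 * (1 - z ^ 2) ^ 3 / (π / 2 - a)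
      = 4 / 9 * π * (1 - z ^ 2) ^ 3 / ((π / 2 + a) * (π / 2 - a)) := by
        rw [div_add_div _ _ hplus.ne' hminus.ne']
        ring
    _ ≤ 4 / 9 * π / (π / 2) ^ 2 := by
        rw [div_le_div_iff₀ (by positivity) (by positivity)]
        nlinarith [pi_pos]
    _ = 2 * (4 / 9 * (1 - 0 ^ 2) ^ 3 / (π / 2)) := by
        field_simp
        ring

/-- The total moment of inertia of the two pieces of the unit disk cut by the
vertical line `x = z` is minimized at `z = 0`. -/
theorem diskInertia_add_ge (z : ℝ) (hz : z ∈ Set.Ioo (-1 : ℝ) 1) :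
    2 * diskInertia 0 ≤ diskInertia z + diskInertia (-z) := by
  wlog hz0 : 0 ≤ z generalizing z
  · simpa [add_comm] using this (-z) ⟨by linarith [hz.2], by linarith [hz.1]⟩ (by linarith)
  rw [diskInertia_eq, diskInertia_eq, diskInertia_eq]
  linarith [diskSecondMoment_add_neg z, diskFirstMoment_sq_div_add_le hz0 hz.2]
end

section
/- ∫₀^∞ ∫_{-∞}^0 Σ_{k=-∞}^∞ |exp(-[(a+b-2k(b-a))²+(a-b)²]/2) - exp(-[(a-b-2k(b-a))²+(a-b)²]/2)| da db < ∞. -/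
/-!
For `a ≤ 0 ≤ b` and every `k ∈ ℤ`, both quadratic forms in the exponents are at least
`(k² + 1)(a² + b²)`: after the substitution `u = b - a ≥ |a ± b|` this reduces to
`|k| u ≤ |a ± b - 2ku|`. Hence the `k`-th summand is dominated by the product Gaussian
`exp (-(k² + 1) a² / 2) · exp (-(k² + 1) b² / 2)`, whose integral over the quadrant is at most
`2π / (k² + 1)`, and these bounds are summable over `ℤ`.
-/

open MeasureTheory Real
open scoped ENNReal

theorem lintegral_lintegral_tsum_mul {α β ι : Type*} [MeasurableSpace α] [MeasurableSpace β]
    [Countable ι] {μ : Measure α} {ν : Measure β} {f : ι → α → ℝ≥0∞} {g : ι → β → ℝ≥0∞}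
    (hf : ∀ i, AEMeasurable (f i) μ) (hg : ∀ i, AEMeasurable (g i) ν) :
    ∫⁻ y, ∫⁻ x, ∑' i, f i x * g i y ∂μ ∂ν = ∑' i, (∫⁻ x, f i x ∂μ) * ∫⁻ y, g i y ∂ν := by
  calc ∫⁻ y, ∫⁻ x, ∑' i, f i x * g i y ∂μ ∂ν
      = ∫⁻ y, ∑' i, (∫⁻ x, f i x ∂μ) * g i y ∂ν := by
        refine lintegral_congr fun y => ?_
        rw [lintegral_tsum fun i => (hf i).mul_const _]
        simp only [lintegral_mul_const'' _ (hf _)]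
    _ = ∑' i, (∫⁻ x, f i x ∂μ) * ∫⁻ y, g i y ∂ν := by
        rw [lintegral_tsum fun i => (hg i).const_mul _]
        simp only [lintegral_const_mul'' _ (hg _)]

lemma setLIntegral_ofReal_exp_neg_mul_sq_le {c : ℝ} (hc : 0 < c) (s : Set ℝ) :
    ∫⁻ x in s, ENNReal.ofReal (exp (-c * x ^ 2)) ≤ ENNReal.ofReal √(π / c) := by
  calc ∫⁻ x in s, ENNReal.ofReal (exp (-c * x ^ 2))
      ≤ ∫⁻ x, ENNReal.ofReal (exp (-c * x ^ 2)) := setLIntegral_le_lintegral _ _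
    _ = ENNReal.ofReal √(π / c) := by
        rw [← ofReal_integral_eq_lintegral_ofReal (integrable_exp_neg_mul_sq hc)
          (ae_of_all _ fun x => (exp_pos _).le), integral_gaussian]

lemma setLIntegral_ofReal_exp_neg_mul_sq_mul_le {c : ℝ} (hc : 0 < c) (s t : Set ℝ) :
    (∫⁻ x in s, ENNReal.ofReal (exp (-c * x ^ 2))) * ∫⁻ y in t, ENNReal.ofReal (exp (-c * y ^ 2))
      ≤ ENNReal.ofReal (π / c) := by
  calc _ ≤ ENNReal.ofReal √(π / c) * ENNReal.ofReal √(π / c) :=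
        mul_le_mul' (setLIntegral_ofReal_exp_neg_mul_sq_le hc s)
          (setLIntegral_ofReal_exp_neg_mul_sq_le hc t)
    _ = ENNReal.ofReal (π / c) := by
        rw [← ENNReal.ofReal_mul (sqrt_nonneg _), mul_self_sqrt (by positivity)]

lemma summable_inv_int_sq_add_one : Summable fun k : ℤ => ((k : ℝ) ^ 2 + 1)⁻¹ := by
  refine (summable_one_div_int_pow.mpr one_lt_two).of_norm_bounded_eventually ?_
  filter_upwards [Filter.eventually_cofinite_ne 0] with k hk
  rw [Real.norm_of_nonneg (by positivity), one_div]
  exact inv_anti₀ (by positivity) (by linarith)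

lemma sq_int_mul_le_sq_sub (k : ℤ) {s u : ℝ} (hs : |s| ≤ u) :
    ((k : ℝ) * u) ^ 2 ≤ (s - 2 * k * u) ^ 2 := by
  have hu : 0 ≤ u := (abs_nonneg s).trans hs
  rcases eq_or_ne k 0 with rfl | hk
  · simpa using sq_nonneg s
  have hk : (1 : ℝ) ≤ |(k : ℝ)| := by exact_mod_cast Int.one_le_abs hk
  rw [sq_le_sq, abs_mul, abs_of_nonneg hu]
  calc |(k : ℝ)| * u ≤ 2 * |(k : ℝ)| * u - u := by nlinarith
    _ ≤ |2 * k * u| - |s| := by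
        rw [abs_mul, abs_mul, abs_of_nonneg hu, abs_two]
        linarith
    _ ≤ |s - 2 * k * u| := abs_sub_comm s _ ▸ abs_sub_abs_le_abs_sub _ _

lemma int_sq_add_one_mul_le_quadratic (k : ℤ) {a b s : ℝ} (ha : a ≤ 0) (hb : 0 ≤ b)
    (hs : |s| ≤ b - a) :
    ((k : ℝ) ^ 2 + 1) * (a ^ 2 + b ^ 2) ≤ (s - 2 * k * (b - a)) ^ 2 + (a - b) ^ 2 := by
  nlinarith [sq_int_mul_le_sq_sub k hs,
    mul_nonneg (by positivity : (0 : ℝ) ≤ (k : ℝ) ^ 2 + 1) (mul_nonneg (neg_nonneg.2 ha) hb)]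

lemma exp_neg_half_quadratic_le (k : ℤ) {a b s : ℝ} (ha : a ≤ 0) (hb : 0 ≤ b)
    (hs : |s| ≤ b - a) :
    exp (-(((s - 2 * k * (b - a)) ^ 2 + (a - b) ^ 2) / 2)) ≤
      exp (-(((k : ℝ) ^ 2 + 1) / 2) * a ^ 2) * exp (-(((k : ℝ) ^ 2 + 1) / 2) * b ^ 2) := by
  rw [← exp_add, exp_le_exp]
  nlinarith [int_sq_add_one_mul_le_quadratic k ha hb hs]

lemma ofReal_abs_sub_exp_le (k : ℤ) {a b : ℝ} (ha : a ≤ 0) (hb : 0 ≤ b) :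
    ENNReal.ofReal
        |exp (-(((a + b - 2 * (k : ℝ) * (b - a)) ^ 2 + (a - b) ^ 2) / 2)) -
          exp (-(((a - b - 2 * (k : ℝ) * (b - a)) ^ 2 + (a - b) ^ 2) / 2))|
      ≤ ENNReal.ofReal (exp (-(((k : ℝ) ^ 2 + 1) / 2) * a ^ 2)) *
          ENNReal.ofReal (exp (-(((k : ℝ) ^ 2 + 1) / 2) * b ^ 2)) := by
  rw [← ENNReal.ofReal_mul (exp_pos _).le]
  refine ENNReal.ofReal_le_ofReal (abs_sub_le_of_nonneg_of_le (exp_pos _).le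
    (exp_neg_half_quadratic_le k ha hb ?_) (exp_pos _).le (exp_neg_half_quadratic_le k ha hb ?_)) <;>
  exact abs_le.2 ⟨by linarith, by linarith⟩

/-- The absolute summability needed for Fubini–Tonelli:
`∫₀^∞ ∫_{-∞}^0 Σ_k |exp(-[(a+b-2k(b-a))²+(a-b)²]/2) - exp(-[(a-b-2k(b-a))²+(a-b)²]/2)| da db < ∞`. -/
theorem abs_summable_integral_lt_top :
    (∫⁻ b in Set.Ioi (0 : ℝ), ∫⁻ a in Set.Iio (0 : ℝ),
      ∑' k : ℤ, ENNReal.ofReal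
        |Real.exp (-(((a + b - 2 * (k : ℝ) * (b - a)) ^ 2 + (a - b) ^ 2) / 2)) -
         Real.exp (-(((a - b - 2 * (k : ℝ) * (b - a)) ^ 2 + (a - b) ^ 2) / 2))|) < ⊤ := by
  set G : ℤ → ℝ → ℝ≥0∞ := fun k x => ENNReal.ofReal (exp (-(((k : ℝ) ^ 2 + 1) / 2) * x ^ 2))
  have hG : ∀ k, Measurable (G k) := fun k => by fun_prop
  have hsum : Summable fun k : ℤ => π / (((k : ℝ) ^ 2 + 1) / 2) :=
    (summable_inv_int_sq_add_one.mul_left (2 * π)).congr fun k => by field_simp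
  calc _ ≤ ∫⁻ b in Set.Ioi (0 : ℝ), ∫⁻ a in Set.Iio (0 : ℝ), ∑' k, G k a * G k b :=
        setLIntegral_mono' measurableSet_Ioi fun b hb =>
          setLIntegral_mono' measurableSet_Iio fun a ha =>
            ENNReal.tsum_le_tsum fun k => ofReal_abs_sub_exp_le k ha.le hb.le
    _ = ∑' k, (∫⁻ a in Set.Iio (0 : ℝ), G k a) * ∫⁻ b in Set.Ioi (0 : ℝ), G k b :=
        lintegral_lintegral_tsum_mul (fun k => (hG k).aemeasurable) (fun k => (hG k).aemeasurable)
    _ ≤ ∑' k : ℤ, ENNReal.ofReal (π / (((k : ℝ) ^ 2 + 1) / 2)) :=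
        ENNReal.tsum_le_tsum fun k =>
          setLIntegral_ofReal_exp_neg_mul_sq_mul_le (by positivity) _ _
    _ < ⊤ := by
        rw [← ENNReal.ofReal_tsum_of_nonneg (fun k => by positivity) hsum]
        exact ENNReal.ofReal_lt_top
end
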